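/- arXiv:0810.2379 — 7 statements merged into one kernel-verified Lean document; each statement's English description precedes it below -/
import Mathlib

section
/- Let k be a field and let X be a variety over k. Then X is plain if and only if for every point x ∈ X there exist n ∈ ℕ and a prime ideal p of the polynomial ring k[x₁,…,xₙ] such that the stalk O_{X,x} of the structure sheaf of X at x is isomorphic, as a k-algebra, to the localization of k[x₁,…,xₙ] at p. -/
open AlgebraicGeometry CategoryTheory

/-- Affine `n`-space over `k`, as a scheme. -/
noncomputable def AffSp (k : Type) [Field k] (n : ℕ) : Scheme :=
  Spec (CommRingCat.of (MvPolynomial (Fin n) k))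

/-- The structure morphism of affine `n`-space over `k`. -/
noncomputable def AffSp.toSpecK (k : Type) [Field k] (n : ℕ) :
    AffSp k n ⟶ Spec (CommRingCat.of k) :=
  Spec.map (CommRingCat.ofHom (algebraMap k (MvPolynomial (Fin n) k)))

/-- A scheme `X` over `k` is *plain* if every point has an open neighborhood
isomorphic, as a `k`-scheme, to an open subscheme of some affine space `𝔸ⁿ_k`. -/
def IsPlainOver (k : Type) [Field k] (X : Scheme)
    (f : X ⟶ Spec (CommRingCat.of k)) : Prop :=
  ∀ x : X, ∃ (U : X.Opens) (_ : x ∈ U) (n : ℕ) (V : (AffSp k n).Opens)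
    (e : (U : Scheme) ≅ (V : Scheme)),
    e.hom ≫ Scheme.Opens.ι V ≫ AffSp.toSpecK k n = Scheme.Opens.ι U ≫ f

/-- The `k`-algebra structure on the stalk `O_{X,x}` of a `k`-scheme `X`. -/
noncomputable def stalkAlg (k : Type) [Field k] (X : Scheme)
    (f : X ⟶ Spec (CommRingCat.of k)) (x : X) :
    Algebra k (X.presheaf.stalk x) :=
  RingHom.toAlgebra
    ((Scheme.ΓSpecIso (CommRingCat.of k)).inv ≫ f.appTop ≫ X.presheaf.germ ⊤ x trivial).hom

/-!
Both sides are pointwise conditions. An isomorphism over `k` between a neighbourhood of `x` and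
an open subscheme of `𝔸ⁿ_k` identifies `𝒪_{X,x}` with a stalk `𝒪_{𝔸ⁿ,y} = k[x₁,…,xₙ]_𝔭`.
Conversely, since `X` and `𝔸ⁿ_k` are integral and of finite type over `k`, a `k`-isomorphism
`𝒪_{𝔸ⁿ,y} ≅ 𝒪_{X,x}` and its inverse spread out to `k`-morphisms `a` near `x` and `b` near `y`.
The composites `b ∘ a` and `a ∘ b` are the identity on stalks, hence agree with the inclusions
near `x` and `y`, so `a` restricts to an isomorphism between open neighbourhoods.
-/

namespace AlgebraicGeometry

universe u

variable {X Y Z S : Scheme.{u}}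

def IsLocallyIsoOver (sX : X ⟶ S) (sY : Y ⟶ S) (x : X) : Prop :=
  ∃ (U : X.Opens) (_ : x ∈ U) (V : Y.Opens) (e : U.toScheme ≅ V.toScheme),
    e.hom ≫ V.ι ≫ sY = U.ι ≫ sX

lemma IsLocallyIsoOver.of_isOpenImmersion {A B : Scheme.{u}} {sX : X ⟶ S} {sY : Y ⟶ S}
    (i : A ⟶ X) (k : B ⟶ Y) [IsOpenImmersion i] [IsOpenImmersion k] (e : A ≅ B)
    (he : e.hom ≫ k ≫ sY = i ≫ sX) {x : X} (hx : x ∈ i.opensRange) :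
    IsLocallyIsoOver sX sY x :=
  ⟨i.opensRange, hx, k.opensRange, i.isoOpensRange.symm ≪≫ e ≪≫ k.isoOpensRange, by
    simp [he]⟩

lemma isIso_morphismRestrict_of_comp_eq_ι {a : X ⟶ Y} [Mono a] {V : Y.Opens}
    (c : V.toScheme ⟶ X) (hc : c ≫ a = V.ι) : IsIso (a ∣_ V) := by
  have : Mono (a ∣_ V) := by
    have : Mono ((a ∣_ V) ≫ V.ι) := by rw [morphismRestrict_ι]; infer_instance
    exact mono_of_mono _ V.ι
  have hc' : Set.range c ⊆ Set.range (a ⁻¹ᵁ V).ι := by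
    rw [Scheme.Opens.range_ι]
    rintro _ ⟨v, rfl⟩
    change (c ≫ a) v ∈ V
    rw [hc]
    exact v.2
  have : IsSplitEpi (a ∣_ V) := ⟨⟨IsOpenImmersion.lift _ c hc', by
    rw [← cancel_mono V.ι]; simp [morphismRestrict_ι, hc]⟩⟩
  exact isIso_of_mono_of_isSplitEpi _

lemma Scheme.Opens.fromSpecStalk_eq_SpecMap_stalkMap_comp (U : X.Opens) (x : U.toScheme)
    (hx : U.ι x ∈ U) :
    U.toScheme.fromSpecStalk x = Spec.map (U.ι.stalkMap x) ≫ U.fromSpecStalkOfMem (U.ι x) hx := by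
  rw [← cancel_mono U.ι, Category.assoc, Scheme.Opens.fromSpecStalkOfMem_ι,
    Scheme.SpecMap_stalkMap_fromSpecStalk]

lemma exists_opens_comp_eq_of_fromSpecStalkOfMem {U : X.Opens} {x : X} (hx : x ∈ U)
    [X.IsGermInjectiveAt x] (f g : U.toScheme ⟶ Y)
    (h : U.fromSpecStalkOfMem x hx ≫ f = U.fromSpecStalkOfMem x hx ≫ g) :
    ∃ W : U.toScheme.Opens, (⟨x, hx⟩ : U.toScheme) ∈ W ∧ W.ι ≫ f = W.ι ≫ g := by
  obtain ⟨x, rfl⟩ : ∃ x' : U.toScheme, U.ι x' = x := ⟨⟨x, hx⟩, rfl⟩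
  have : U.toScheme.IsGermInjectiveAt x := isGermInjectiveAt_iff_of_isOpenImmersion.mp ‹_›
  show ∃ W : U.toScheme.Opens, x ∈ W ∧ _
  refine spread_out_unique_of_isGermInjective' f g ?_
  rw [U.fromSpecStalk_eq_SpecMap_stalkMap_comp x hx, Category.assoc, Category.assoc, h]

lemma apply_eq_of_fromSpecStalk_comp_eq {x : X} {y : Y} (a : X ⟶ Y)
    (σ : Y.presheaf.stalk y ⟶ X.presheaf.stalk x) [IsLocalHom σ.hom]
    (h : X.fromSpecStalk x ≫ a = Spec.map σ ≫ Y.fromSpecStalk y) : a x = y := by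
  let p : Spec (X.presheaf.stalk x) := IsLocalRing.closedPoint _
  have hp : X.fromSpecStalk x p = x := Scheme.fromSpecStalk_closedPoint
  have hσp : Spec.map σ p = IsLocalRing.closedPoint _ := Spec_closedPoint
  rw [← hp, ← Scheme.Hom.comp_apply, h, Scheme.Hom.comp_apply, hσp,
    Scheme.fromSpecStalk_closedPoint]

theorem isLocallyIsoOver_of_fromSpecStalk_comp {x : X} {y : Y} [X.IsGermInjectiveAt x]
    [Y.IsGermInjectiveAt y] {sX : X ⟶ S} {sY : Y ⟶ S} (j : X ⟶ Z) [IsOpenImmersion j]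
    (a : X ⟶ Y) (b : Y ⟶ Z) (haS : a ≫ sY = sX) (σ : Y.presheaf.stalk y ≅ X.presheaf.stalk x)
    (ha : X.fromSpecStalk x ≫ a = Spec.map σ.hom ≫ Y.fromSpecStalk y)
    (hb : Y.fromSpecStalk y ≫ b = Spec.map σ.inv ≫ X.fromSpecStalk x ≫ j) :
    IsLocallyIsoOver sX sY x := by
  have hxy : a x = y := apply_eq_of_fromSpecStalk_comp_eq a σ.hom ha
  obtain ⟨U, hxU, hU⟩ := spread_out_unique_of_isGermInjective' (a ≫ b) j (by
    rw [reassoc_of% ha, hb, ← Spec.map_comp_assoc, σ.inv_hom_id, Spec.map_id, Category.id_comp])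
  have hbx : b y = j x := by
    rw [← hxy, ← Scheme.Hom.comp_apply]
    exact congr($hU ⟨x, hxU⟩)
  let V₁ := b ⁻¹ᵁ (U.ι ≫ j).opensRange
  have hyV₁ : y ∈ V₁ := ⟨⟨x, hxU⟩, hbx.symm⟩
  have hrange : Set.range (V₁.ι ≫ b) ⊆ Set.range (U.ι ≫ j) := by
    rintro _ ⟨v, rfl⟩
    exact v.2
  let c : V₁.toScheme ⟶ U := IsOpenImmersion.lift (U.ι ≫ j) (V₁.ι ≫ b) hrange
  have hc : c ≫ U.ι ≫ j = V₁.ι ≫ b := IsOpenImmersion.lift_fac _ _ _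
  have hcσ : V₁.fromSpecStalkOfMem y hyV₁ ≫ c ≫ U.ι = Spec.map σ.inv ≫ X.fromSpecStalk x := by
    rw [← cancel_mono j]
    simp [hc, hb]
  obtain ⟨V₂, hyV₂, hV₂⟩ := exists_opens_comp_eq_of_fromSpecStalkOfMem hyV₁ (c ≫ U.ι ≫ a) V₁.ι
    (by rw [reassoc_of% hcσ, ha, ← Spec.map_comp_assoc, σ.hom_inv_id, Spec.map_id,
      Category.id_comp, Scheme.Opens.fromSpecStalkOfMem_ι])
  let V := V₁.ι ''ᵁ V₂
  -- `U.ι ≫ a` is a monomorphism, its composite with `b` being the open immersion `U.ι ≫ j`, and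
  -- `c` gives a section of it over `V`; hence it restricts to an isomorphism over `V`.
  have : Mono (U.ι ≫ a) := by
    have : Mono ((U.ι ≫ a) ≫ b) := by rw [Category.assoc, hU]; infer_instance
    exact mono_of_mono _ b
  have := isIso_morphismRestrict_of_comp_eq_ι (a := U.ι ≫ a) (V := V)
    ((V₁.ι.isoImage V₂).inv ≫ V₂.ι ≫ c) (by
      simp only [Category.assoc, hV₂, Scheme.Hom.isoImage_inv_ι]; rfl)
  refine IsLocallyIsoOver.of_isOpenImmersion (((U.ι ≫ a) ⁻¹ᵁ V).ι ≫ U.ι) V.ι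
    (asIso ((U.ι ≫ a) ∣_ V)) (by
      rw [asIso_hom, morphismRestrict_ι_assoc, Category.assoc, haS, Category.assoc]) ?_
  exact ⟨⟨⟨x, hxU⟩, ⟨⟨y, hyV₁⟩, hyV₂, hxy.symm⟩⟩, rfl⟩

theorem isLocallyIsoOver_of_stalkIso {sX : X ⟶ S} {sY : Y ⟶ S} [LocallyOfFiniteType sX]
    [LocallyOfFiniteType sY] {x : X} {y : Y} [X.IsGermInjectiveAt x] [Y.IsGermInjectiveAt y]
    (σ : Y.presheaf.stalk y ≅ X.presheaf.stalk x)
    (hσ : Spec.map σ.hom ≫ Y.fromSpecStalk y ≫ sY = X.fromSpecStalk x ≫ sX) :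
    IsLocallyIsoOver sX sY x := by
  -- `σ⁻¹` is spread out first, so that `σ` can then be spread out into its domain `V`.
  obtain ⟨V, hyV, b, hb, -⟩ := spread_out_of_isGermInjective' sY sX
    (Spec.map σ.inv ≫ X.fromSpecStalk x) (by
      rw [Category.assoc, ← hσ, ← Spec.map_comp_assoc, σ.hom_inv_id, Spec.map_id,
        Category.id_comp])
  obtain ⟨U, hxU, a, ha, haS⟩ := spread_out_of_isGermInjective' sX (V.ι ≫ sY)
    (Spec.map σ.hom ≫ V.fromSpecStalkOfMem y hyV) (by simpa using hσ)
  obtain ⟨x, rfl⟩ : ∃ x' : U.toScheme, U.ι x' = x := ⟨⟨x, hxU⟩, rfl⟩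
  obtain ⟨y, rfl⟩ : ∃ y' : V.toScheme, V.ι y' = y := ⟨⟨y, hyV⟩, rfl⟩
  have : U.toScheme.IsGermInjectiveAt x := isGermInjectiveAt_iff_of_isOpenImmersion.mp ‹_›
  have : V.toScheme.IsGermInjectiveAt y := isGermInjectiveAt_iff_of_isOpenImmersion.mp ‹_›
  let σ' := (asIso (V.ι.stalkMap y)).symm ≪≫ σ ≪≫ asIso (U.ι.stalkMap x)
  have ha' : U.toScheme.fromSpecStalk x ≫ a = Spec.map σ'.hom ≫ V.toScheme.fromSpecStalk y := by
    rw [U.fromSpecStalk_eq_SpecMap_stalkMap_comp x hxU,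
      V.fromSpecStalk_eq_SpecMap_stalkMap_comp y hyV, Category.assoc, ← ha]
    simp [σ']
  have hb' : V.toScheme.fromSpecStalk y ≫ b =
      Spec.map σ'.inv ≫ U.toScheme.fromSpecStalk x ≫ U.ι := by
    rw [U.fromSpecStalk_eq_SpecMap_stalkMap_comp x hxU,
      V.fromSpecStalk_eq_SpecMap_stalkMap_comp y hyV, Category.assoc, ← hb]
    simp [σ', -Scheme.SpecMap_stalkMap_fromSpecStalk]
  obtain ⟨U₀, hxU₀, V₀, e, he⟩ :=
    isLocallyIsoOver_of_fromSpecStalk_comp U.ι a b haS σ' ha' hb'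
  exact IsLocallyIsoOver.of_isOpenImmersion (U₀.ι ≫ U.ι) (V₀.ι ≫ V.ι) e (by simpa using he)
    ⟨⟨x, hxU₀⟩, rfl⟩

theorem IsLocallyIsoOver.exists_stalkIso {sX : X ⟶ S} {sY : Y ⟶ S} {x : X}
    (h : IsLocallyIsoOver sX sY x) :
    ∃ (y : Y) (σ : Y.presheaf.stalk y ≅ X.presheaf.stalk x),
      Spec.map σ.hom ≫ Y.fromSpecStalk y ≫ sY = X.fromSpecStalk x ≫ sX := by
  obtain ⟨U, hxU, V, e, he⟩ := h
  obtain ⟨x, rfl⟩ : ∃ x' : U.toScheme, U.ι x' = x := ⟨⟨x, hxU⟩, rfl⟩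
  refine ⟨(e.hom ≫ V.ι) x,
    asIso ((e.hom ≫ V.ι).stalkMap x) ≪≫ (asIso (U.ι.stalkMap x)).symm, ?_⟩
  rw [Iso.trans_hom, asIso_hom, Iso.symm_hom, asIso_inv, Spec.map_comp_assoc,
    Scheme.SpecMap_stalkMap_fromSpecStalk_assoc, Category.assoc, he,
    ← Scheme.SpecMap_stalkMap_fromSpecStalk_assoc U.ι, ← Spec.map_comp_assoc, IsIso.hom_inv_id,
    Spec.map_id, Category.id_comp]

theorem isLocallyIsoOver_iff_exists_stalkIso {sX : X ⟶ S} {sY : Y ⟶ S}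
    [LocallyOfFiniteType sX] [LocallyOfFiniteType sY] {x : X} [X.IsGermInjectiveAt x]
    [Y.IsGermInjective] :
    IsLocallyIsoOver sX sY x ↔ ∃ (y : Y) (σ : Y.presheaf.stalk y ≅ X.presheaf.stalk x),
      Spec.map σ.hom ≫ Y.fromSpecStalk y ≫ sY = X.fromSpecStalk x ≫ sX :=
  ⟨IsLocallyIsoOver.exists_stalkIso, fun ⟨_, σ, hσ⟩ ↦ isLocallyIsoOver_of_stalkIso σ hσ⟩

-- `stalkAlg k X f x` is by definition the algebra `(stalkAlgebraMap f x).hom.toAlgebra`.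
noncomputable def stalkAlgebraMap {R : CommRingCat.{u}} (h : X ⟶ Spec R) (x : X) :
    R ⟶ X.presheaf.stalk x :=
  (Scheme.ΓSpecIso R).inv ≫ h.appTop ≫ X.presheaf.germ ⊤ x trivial

lemma fromSpecStalk_comp_eq_SpecMap_stalkAlgebraMap {R : CommRingCat.{u}} (h : X ⟶ Spec R)
    (x : X) : X.fromSpecStalk x ≫ h = Spec.map (stalkAlgebraMap h x) := by
  rw [← Scheme.SpecMap_stalkMap_fromSpecStalk, Spec.fromSpecStalk_eq, ← Spec.map_comp,
    Category.assoc]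
  exact congrArg (fun g ↦ Spec.map ((Scheme.ΓSpecIso R).inv ≫ g))
    (Scheme.Hom.germ_stalkMap h ⊤ x trivial)

lemma SpecMap_comp_fromSpecStalk_comp_eq_iff {R : CommRingCat.{u}} {sX : X ⟶ Spec R}
    {sY : Y ⟶ Spec R} {x : X} {y : Y} (σ : Y.presheaf.stalk y ⟶ X.presheaf.stalk x) :
    Spec.map σ ≫ Y.fromSpecStalk y ≫ sY = X.fromSpecStalk x ≫ sX ↔
      stalkAlgebraMap sY y ≫ σ = stalkAlgebraMap sX x := by
  rw [fromSpecStalk_comp_eq_SpecMap_stalkAlgebraMap, fromSpecStalk_comp_eq_SpecMap_stalkAlgebraMap,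
    ← Spec.map_comp, Spec.map_inj]

lemma stalkAlgebraMap_SpecMap_comp_stalkIso_hom {R A : CommRingCat.{u}} (φ : R ⟶ A)
    (y : PrimeSpectrum A) : stalkAlgebraMap (Spec.map φ) y ≫ (Spec.stalkIso A y).hom =
      φ ≫ CommRingCat.ofHom (algebraMap A (Localization.AtPrime y.asIdeal)) := by
  dsimp only [stalkAlgebraMap]
  rw [← Scheme.ΓSpecIso_inv_naturality_assoc, ← Spec.algebraMap_stalkIso_inv,
    Category.assoc, Category.assoc, Iso.inv_hom_id, Category.comp_id]

theorem exists_stalkIso_iff_nonempty_algEquiv {R A : Type u} [CommRing R] [CommRing A]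
    [Algebra R A] (f : X ⟶ Spec (CommRingCat.of R)) (x : X) :
    (∃ (y : PrimeSpectrum A)
        (σ : (Spec (CommRingCat.of A)).presheaf.stalk y ≅ X.presheaf.stalk x),
        stalkAlgebraMap (Spec.map (CommRingCat.ofHom (algebraMap R A))) y ≫ σ.hom =
          stalkAlgebraMap f x) ↔
      ∃ (p : Ideal A) (_ : p.IsPrime), Nonempty (@AlgEquiv R (X.presheaf.stalk x)
        (Localization.AtPrime p) _ _ _ (stalkAlgebraMap f x).hom.toAlgebra _) := by
  let := (stalkAlgebraMap f x).hom.toAlgebra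
  constructor
  · rintro ⟨y, σ, hσ⟩
    have key : stalkAlgebraMap f x ≫ σ.inv ≫ (Spec.stalkIso (CommRingCat.of A) y).hom =
        CommRingCat.ofHom (algebraMap R (Localization.AtPrime y.asIdeal)) := by
      rw [← hσ, Category.assoc, Iso.hom_inv_id_assoc, stalkAlgebraMap_SpecMap_comp_stalkIso_hom,
        ← CommRingCat.ofHom_comp, ← IsScalarTower.algebraMap_eq]
    exact ⟨y.asIdeal, y.isPrime, ⟨AlgEquiv.ofRingEquiv
      (f := (σ.symm ≪≫ Spec.stalkIso (CommRingCat.of A) y).commRingCatIsoToRingEquiv)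
      fun r ↦ congr($key r)⟩⟩
  · rintro ⟨p, hp, ⟨ε⟩⟩
    refine ⟨⟨p, hp⟩, Spec.stalkIso (CommRingCat.of A) ⟨p, hp⟩ ≪≫
      ε.symm.toRingEquiv.toCommRingCatIso, ?_⟩
    rw [Iso.trans_hom, ← Category.assoc, stalkAlgebraMap_SpecMap_comp_stalkIso_hom,
      ← CommRingCat.ofHom_comp, ← IsScalarTower.algebraMap_eq]
    ext r
    exact ε.symm.commutes r

end AlgebraicGeometry

open AlgebraicGeometry

instance (k : Type) [Field k] (n : ℕ) : LocallyOfFiniteType (AffSp.toSpecK k n) :=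
  HasRingHomProperty.Spec_iff.mpr (RingHom.finiteType_algebraMap.mpr inferInstance)

instance (k : Type) [Field k] (n : ℕ) : IsIntegral (AffSp k n) :=
  inferInstanceAs (IsIntegral (Spec (CommRingCat.of (MvPolynomial (Fin n) k))))

theorem stmt_4_general (k : Type) [Field k] (X : Scheme) (f : X ⟶ Spec (CommRingCat.of k))
    [IsIntegral X] [LocallyOfFiniteType f] :
    IsPlainOver k X f ↔
      ∀ x : X, ∃ (n : ℕ) (p : Ideal (MvPolynomial (Fin n) k)) (_ : p.IsPrime),
        Nonempty (@AlgEquiv k (X.presheaf.stalk x) (Localization.AtPrime p)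
          _ _ _ (stalkAlg k X f x) _) := by
  have hplain : IsPlainOver k X f ↔ ∀ x, ∃ n, IsLocallyIsoOver f (AffSp.toSpecK k n) x :=
    forall_congr' fun x ↦ ⟨fun ⟨U, hU, n, V, e, he⟩ ↦ ⟨n, U, hU, V, e, he⟩,
      fun ⟨n, U, hU, V, e, he⟩ ↦ ⟨U, hU, n, V, e, he⟩⟩
  rw [hplain]
  refine forall_congr' fun x ↦ exists_congr fun n ↦ ?_
  rw [isLocallyIsoOver_iff_exists_stalkIso]
  simp only [SpecMap_comp_fromSpecStalk_comp_eq_iff]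
  exact exists_stalkIso_iff_nonempty_algEquiv f x

/-- A variety `X` over `k` is plain if and only if each stalk `O_{X,x}` is
`k`-isomorphic to a localization of a polynomial ring `k[x₁,…,xₙ]` at a prime ideal. -/
theorem stmt_4 (k : Type) [Field k] (X : Scheme) (f : X ⟶ Spec (CommRingCat.of k))
    [IsIntegral X] [LocallyOfFiniteType f] [QuasiCompact f] :
    IsPlainOver k X f ↔
      ∀ x : X, ∃ (n : ℕ) (p : Ideal (MvPolynomial (Fin n) k)) (_ : p.IsPrime),
        Nonempty (@AlgEquiv k (X.presheaf.stalk x) (Localization.AtPrime p)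
          _ _ _ (stalkAlg k X f x) _) :=
  stmt_4_general k X f
end

section
/- Let k be a field and let X and Y be plain varieties over k. Then the fiber product X ×_k Y is a plain variety over k. -/
open AlgebraicGeometry CategoryTheory Limits

/-!
Charts multiply: if `U ⊆ X` and `W ⊆ Y` embed openly into `𝔸ⁿ` and `𝔸ᵐ` over `k`, then
`U ×_k W` embeds openly into `𝔸ⁿ ×_k 𝔸ᵐ ≅ 𝔸ⁿ⁺ᵐ`, since `k[x] ⊗_k k[y] ≅ k[x, y]`. These
product charts cover `X ×_k Y`, which is therefore plain, and reduced because open subschemes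
of affine space are. They are also irreducible, and any two of them meet: `U₁ ∩ U₂` and
`W₁ ∩ W₂` are nonempty since `X` and `Y` are irreducible, and over the point `Spec k` any
pair of points lifts to the fibre product. So `X ×_k Y` is irreducible, hence integral.
-/

open TensorProduct

theorem preirreducibleSpace_of_isOpen_cover {Z : Type*} [TopologicalSpace Z] (O : Z → Set Z)
    (hO : ∀ z, IsOpen (O z)) (hmem : ∀ z, z ∈ O z) (hirr : ∀ z, IsPreirreducible (O z))
    (hinter : ∀ z w, (O z ∩ O w).Nonempty) : PreirreducibleSpace Z := by
  refine .of_forall_nonempty_inter fun u v hu hv ⟨a, ha⟩ ⟨b, hb⟩ ↦ ?_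
  obtain ⟨c, -, hcu, hcb⟩ := hirr a u (O b) hu (hO b) ⟨a, hmem a, ha⟩ (hinter a b)
  obtain ⟨d, -, hd⟩ := hirr b u v hu hv ⟨c, hcb, hcu⟩ ⟨b, hmem b, hb⟩
  exact ⟨d, hd⟩

variable (k : Type) [Field k]

instance AffSp.isIntegral (n : ℕ) : IsIntegral (AffSp k n) := by
  unfold AffSp; infer_instance

noncomputable def MvPolynomial.finAddAlgEquivTensor (n m : ℕ) :
    MvPolynomial (Fin (n + m)) k ≃ₐ[k] MvPolynomial (Fin n) k ⊗[k] MvPolynomial (Fin m) k :=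
  ((MvPolynomial.tensorEquivSum k (Fin n) (Fin m) k).trans
    (MvPolynomial.renameEquiv k finSumFinEquiv)).symm

noncomputable def AffSp.pullbackIso (n m : ℕ) :
    pullback (AffSp.toSpecK k n) (AffSp.toSpecK k m) ≅ AffSp k (n + m) :=
  pullbackSpecIso k (MvPolynomial (Fin n) k) (MvPolynomial (Fin m) k) ≪≫
    Scheme.Spec.mapIso (MvPolynomial.finAddAlgEquivTensor k n m).toRingEquiv.toCommRingCatIso.op

variable {k}

theorem AffSp.pullbackIso_hom_toSpecK (n m : ℕ) :
    (AffSp.pullbackIso k n m).hom ≫ AffSp.toSpecK k (n + m) =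
      pullback.fst _ _ ≫ AffSp.toSpecK k n := by
  have hbase : CommRingCat.ofHom (algebraMap k (MvPolynomial (Fin (n + m)) k)) ≫
      CommRingCat.ofHom (MvPolynomial.finAddAlgEquivTensor k n m).toRingHom =
      CommRingCat.ofHom (algebraMap k (MvPolynomial (Fin n) k ⊗[k] MvPolynomial (Fin m) k)) := by
    ext a; exact (MvPolynomial.finAddAlgEquivTensor k n m).commutes a
  unfold AffSp.pullbackIso AffSp.toSpecK AffSp
  rw [Iso.trans_hom, Category.assoc]
  change _ ≫ Spec.map (CommRingCat.ofHom (MvPolynomial.finAddAlgEquivTensor k n m).toRingHom) ≫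
    Spec.map (CommRingCat.ofHom (algebraMap k (MvPolynomial (Fin (n + m)) k))) = _
  rw [← Spec.map_comp, hbase]
  exact pullbackSpecIso_hom_base k _ _

theorem AffSp.exists_isOpenImmersion_pullback {P Q : Scheme} {a : P ⟶ Spec (.of k)}
    {b : Q ⟶ Spec (.of k)} {n m : ℕ} (ιP : P ⟶ AffSp k n) [IsOpenImmersion ιP]
    (hP : ιP ≫ AffSp.toSpecK k n = a) (ιQ : Q ⟶ AffSp k m) [IsOpenImmersion ιQ]
    (hQ : ιQ ≫ AffSp.toSpecK k m = b) :
    ∃ ι : pullback a b ⟶ AffSp k (n + m),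
      IsOpenImmersion ι ∧ ι ≫ AffSp.toSpecK k (n + m) = pullback.fst a b ≫ a := by
  subst hP hQ
  refine ⟨pullback.map _ _ _ _ ιP ιQ (𝟙 _) (by simp) (by simp) ≫ (AffSp.pullbackIso k n m).hom,
    inferInstance, ?_⟩
  rw [Category.assoc, AffSp.pullbackIso_hom_toSpecK, pullback.lift_fst_assoc, Category.assoc]

theorem isPlainOver_iff {X : Scheme} (f : X ⟶ Spec (.of k)) :
    IsPlainOver k X f ↔ ∀ x : X, ∃ (P : Scheme) (j : P ⟶ X) (_ : IsOpenImmersion j)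
      (_ : x ∈ Set.range j) (n : ℕ) (ι : P ⟶ AffSp k n) (_ : IsOpenImmersion ι),
      ι ≫ AffSp.toSpecK k n = j ≫ f := by
  refine ⟨fun h x ↦ ?_, fun h x ↦ ?_⟩
  · obtain ⟨U, hxU, n, V, e, he⟩ := h x
    exact ⟨U, U.ι, inferInstance, by simpa using hxU, n, e.hom ≫ V.ι, inferInstance,
      by simpa using he⟩
  · obtain ⟨P, j, _, hx, n, ι, _, hι⟩ := h x
    refine ⟨j.opensRange, hx, n, ι.opensRange,
      IsOpenImmersion.isoOfRangeEq j.opensRange.ι j (by simp) ≪≫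
        IsOpenImmersion.isoOfRangeEq ι ι.opensRange.ι (by simp), ?_⟩
    simp [hι]

theorem IsPlainOver.isReduced {X : Scheme} {f : X ⟶ Spec (.of k)} (h : IsPlainOver k X f) :
    IsReduced X := by
  choose U hxU n V e _ using h
  let 𝒰 : X.OpenCover :=
    .mkOfCovers X (fun x ↦ U x) (fun x ↦ (U x).ι) fun x ↦ ⟨x, ⟨x, hxU x⟩, rfl⟩
  have hU (x : X) : IsReduced (U x) := isReduced_of_isOpenImmersion (e x).hom
  have : ∀ x, IsReduced (𝒰.X x) := hU
  exact IsReduced.of_openCover X 𝒰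

section Pullback

variable {X Y : Scheme} {f : X ⟶ Spec (.of k)} {g : Y ⟶ Spec (.of k)}

theorem IsPlainOver.exists_chart_pullback (hX : IsPlainOver k X f) (hY : IsPlainOver k Y g)
    (x : X) (y : Y) :
    ∃ (U : Set X) (W : Set Y), IsOpen U ∧ IsOpen W ∧ x ∈ U ∧ y ∈ W ∧
      ∃ (P : Scheme) (j : P ⟶ pullback f g) (_ : IsOpenImmersion j),
        Set.range j = pullback.fst f g ⁻¹' U ∩ pullback.snd f g ⁻¹' W ∧
        ∃ (n : ℕ) (ι : P ⟶ AffSp k n) (_ : IsOpenImmersion ι),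
          ι ≫ AffSp.toSpecK k n = j ≫ pullback.fst f g ≫ f := by
  obtain ⟨P, jP, _, hx, n, ιP, _, hP⟩ := (isPlainOver_iff f).1 hX x
  obtain ⟨Q, jQ, _, hy, m, ιQ, _, hQ⟩ := (isPlainOver_iff g).1 hY y
  obtain ⟨ι, _, hι⟩ := AffSp.exists_isOpenImmersion_pullback ιP hP ιQ hQ
  refine ⟨_, _, jP.isOpenEmbedding.isOpen_range, jQ.isOpenEmbedding.isOpen_range, hx, hy,
    pullback (jP ≫ f) (jQ ≫ g), pullback.map _ _ _ _ jP jQ (𝟙 _) (by simp) (by simp),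
    inferInstance, Scheme.Pullback.range_map .., n + m, ι, inferInstance,
    by rw [hι, pullback.lift_fst_assoc, Category.assoc]⟩

theorem isPlainOver_pullback (hX : IsPlainOver k X f) (hY : IsPlainOver k Y g) :
    IsPlainOver k (pullback f g) (pullback.fst f g ≫ f) := by
  refine (isPlainOver_iff _).2 fun z ↦ ?_
  obtain ⟨U, W, -, -, hzU, hzW, P, j, _, hj, n, ι, _, hι⟩ :=
    hX.exists_chart_pullback hY (pullback.fst f g z) (pullback.snd f g z)
  exact ⟨P, j, inferInstance, by rw [hj]; exact ⟨hzU, hzW⟩, n, ι, inferInstance, hι⟩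

theorem IsPlainOver.irreducibleSpace_pullback [IrreducibleSpace X] [IrreducibleSpace Y]
    (hX : IsPlainOver k X f) (hY : IsPlainOver k Y g) :
    IrreducibleSpace (pullback f g : Scheme) := by
  have hsurj (x : X) (y : Y) : ∃ z, pullback.fst f g z = x ∧ pullback.snd f g z = y :=
    Scheme.Pullback.exists_preimage_pullback x y (Subsingleton.elim _ _)
  choose U W hU hW hzU hzW P j _ hj n ι _ _ using fun (z : ↑(pullback f g)) ↦
    hX.exists_chart_pullback hY (pullback.fst f g z) (pullback.snd f g z)
  have hmem (z : ↑(pullback f g)) : z ∈ Set.range (j z) := by rw [hj]; exact ⟨hzU z, hzW z⟩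
  have : PreirreducibleSpace (pullback f g : Scheme) := by
    refine preirreducibleSpace_of_isOpen_cover (fun z ↦ Set.range (j z))
      (fun z ↦ (j z).isOpenEmbedding.isOpen_range) hmem (fun z ↦ ?_) (fun z w ↦ ?_)
    · have : Nonempty (P z) := ⟨(hmem z).choose⟩
      have := isIntegral_of_isOpenImmersion (ι z)
      simpa using ((IrreducibleSpace.isIrreducible_univ (P z)).image (j z)
        (j z).continuous.continuousOn).isPreirreducible
    · obtain ⟨x, hxz, hxw⟩ := nonempty_preirreducible_inter (hU z) (hU w) ⟨_, hzU z⟩ ⟨_, hzU w⟩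
      obtain ⟨y, hyz, hyw⟩ := nonempty_preirreducible_inter (hW z) (hW w) ⟨_, hzW z⟩ ⟨_, hzW w⟩
      obtain ⟨t, rfl, rfl⟩ := hsurj x y
      exact ⟨t, by rw [hj]; exact ⟨hxz, hyz⟩, by rw [hj]; exact ⟨hxw, hyw⟩⟩
  obtain ⟨z, -⟩ := hsurj (Nonempty.some inferInstance) (Nonempty.some inferInstance)
  exact { toNonempty := ⟨z⟩ }

end Pullback

/-- The fiber product over `k` of two plain varieties `X` and `Y` over a field `k` is
again a plain variety over `k`. -/
theorem stmt_7 (k : Type) [Field k]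
    (X Y : Scheme) (f : X ⟶ Spec (CommRingCat.of k)) (g : Y ⟶ Spec (CommRingCat.of k))
    [IsIntegral X] [LocallyOfFiniteType f] [QuasiCompact f]
    [IsIntegral Y] [LocallyOfFiniteType g] [QuasiCompact g]
    (hX : IsPlainOver k X f) (hY : IsPlainOver k Y g) :
    IsIntegral (pullback f g) ∧
      LocallyOfFiniteType (pullback.fst f g ≫ f) ∧
      QuasiCompact (pullback.fst f g ≫ f) ∧
      IsPlainOver k (pullback f g) (pullback.fst f g ≫ f) := by
  have hP := isPlainOver_pullback hX hY
  have := hP.isReduced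
  have := hX.irreducibleSpace_pullback hY
  exact ⟨isIntegral_of_irreducibleSpace_of_isReduced _, inferInstance, inferInstance, hP⟩
end

section
/- Let R be an integral domain with fraction field K, let I ⊆ R be an ideal, and let a ∈ I be nonzero. Then the set { z ∈ K : there exist n ∈ ℕ and x ∈ Iⁿ with z = x / aⁿ } is equal to the R-subalgebra of K generated by the set { b / a : b ∈ I }. (This identifies the affine chart ring R[I/a] of the blowup of Spec R along I.) -/
/-!
Every generator `b / a` has the form `x / aⁿ` with `n = 1`, and, conversely, `x / aⁿ` with
`x ∈ Iⁿ` is a sum of products of `n` generators. The fractions `x / aⁿ` form a subalgebra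
because `a ∈ I` lets one pass to a common denominator:
`x / aⁿ + y / aᵐ = (x aᵐ + y aⁿ) / aⁿ⁺ᵐ` with `x aᵐ + y aⁿ ∈ Iⁿ⁺ᵐ`.
-/

namespace Ideal

variable {R K : Type*} [CommRing R] [Field K] [Algebra R K] (I : Ideal R)

theorem algebraMap_div_pow_mem_adjoin (a : R) {n : ℕ} {x : R} (hx : x ∈ I ^ n) :
    algebraMap R K x / algebraMap R K a ^ n ∈
      Algebra.adjoin R {z : K | ∃ b ∈ I, z = algebraMap R K b / algebraMap R K a} := by
  induction n generalizing x with
  | zero => simp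
  | succ n ih =>
    rw [pow_succ'] at hx
    refine Submodule.mul_induction_on hx (fun b hb y hy => ?_) (fun y z hy hz => ?_)
    · rw [map_mul, pow_succ', ← div_mul_div_comm]
      exact mul_mem (Algebra.subset_adjoin ⟨b, hb, rfl⟩) (ih hy)
    · rw [map_add, add_div]
      exact add_mem hy hz

theorem mul_pow_add_mul_pow_mem_pow_add {a : R} (haI : a ∈ I) {n m : ℕ} {x y : R}
    (hx : x ∈ I ^ n) (hy : y ∈ I ^ m) : x * a ^ m + y * a ^ n ∈ I ^ (n + m) := by
  refine add_mem ?_ ?_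
  · rw [pow_add]
    exact Submodule.mul_mem_mul hx (pow_mem_pow haI m)
  · rw [pow_add, mul_comm (I ^ n)]
    exact Submodule.mul_mem_mul hy (pow_mem_pow haI n)

/-- The affine chart ring `R[I/a]` of the blowup of `Spec R` along `I`, as a subring of `K`. -/
def blowupChart {a : R} (haI : a ∈ I) (ha : algebraMap R K a ≠ 0) : Subalgebra R K where
  carrier := {z | ∃ (n : ℕ) (x : R), x ∈ I ^ n ∧ z = algebraMap R K x / algebraMap R K a ^ n}
  mul_mem' := by
    rintro _ _ ⟨n, x, hx, rfl⟩ ⟨m, y, hy, rfl⟩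
    refine ⟨n + m, x * y, ?_, ?_⟩
    · rw [pow_add]
      exact Submodule.mul_mem_mul hx hy
    · rw [map_mul, pow_add, div_mul_div_comm]
  add_mem' := by
    rintro _ _ ⟨n, x, hx, rfl⟩ ⟨m, y, hy, rfl⟩
    refine ⟨n + m, x * a ^ m + y * a ^ n, I.mul_pow_add_mul_pow_mem_pow_add haI hx hy, ?_⟩
    rw [div_add_div _ _ (pow_ne_zero n ha) (pow_ne_zero m ha)]
    simp only [map_add, map_mul, map_pow, pow_add, mul_comm (algebraMap R K y)]
  algebraMap_mem' r := ⟨0, r, by simp, by simp⟩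

theorem adjoin_div_le_blowupChart {a : R} (haI : a ∈ I) (ha : algebraMap R K a ≠ 0) :
    Algebra.adjoin R {z : K | ∃ b ∈ I, z = algebraMap R K b / algebraMap R K a} ≤
      I.blowupChart haI ha :=
  Algebra.adjoin_le <| by
    rintro _ ⟨b, hb, rfl⟩
    exact ⟨1, b, by simpa using hb, by simp⟩

end Ideal

/-- For an integral domain `R` with fraction field `K`, an ideal `I ⊆ R` and a nonzero
`a ∈ I`, the set `{x/aⁿ : x ∈ Iⁿ, n ∈ ℕ}` equals the `R`-subalgebra of `K` generated by
`{b/a : b ∈ I}`.  (This identifies the affine chart ring `R[I/a]` of the blowup of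
`Spec R` along `I`.) -/
theorem stmt_8 (R : Type*) [CommRing R] [IsDomain R] (I : Ideal R) (a : R)
    (haI : a ∈ I) (ha : a ≠ 0) :
    {z : FractionRing R | ∃ (n : ℕ) (x : R), x ∈ I ^ n ∧
        z = algebraMap R (FractionRing R) x / (algebraMap R (FractionRing R) a) ^ n} =
      (Algebra.adjoin R
        {z : FractionRing R | ∃ b ∈ I,
          z = algebraMap R (FractionRing R) b / algebraMap R (FractionRing R) a} :
        Subalgebra R (FractionRing R)) := by
  have hfa : algebraMap R (FractionRing R) a ≠ 0 :=
    (map_ne_zero_iff _ (IsFractionRing.injective R (FractionRing R))).mpr ha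
  refine Set.Subset.antisymm ?_ (I.adjoin_div_le_blowupChart haI hfa)
  rintro _ ⟨n, x, hx, rfl⟩
  exact I.algebraMap_div_pow_mem_adjoin a hx
end

section
/- Let A be an integral domain with fraction field K, let f ∈ A, let x₁,…,x_r ∈ A, let g₁,…,g_r be units of A, and set f_j = f + x_j·g_j for j = 1,…,r. Fix i with 1 ≤ i ≤ r and assume fᵢ ≠ 0. Then, as A-subalgebras of K, A[f/fᵢ, f₁/fᵢ, …, f_r/fᵢ] = A[x₁/fᵢ, …, x_r/fᵢ]. -/
/-!
With `a = f/fᵢ` and `yⱼ = xⱼ/fᵢ`, the generators `fⱼ/fᵢ` are `a + gⱼ yⱼ`; as `gⱼ` is a unit, in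
presence of `a` they may be traded for the `yⱼ`. Finally `fᵢ/fᵢ = 1` gives `a = 1 - gᵢ yᵢ`, so
`a` is redundant.
-/

namespace Algebra

variable {A B ι : Type*} [CommRing A] [Ring B] [Algebra A B]

theorem adjoin_insert_range_add_unit_smul (a : B) (y : ι → B) (g : ι → Aˣ) :
    adjoin A (insert a (Set.range fun j => a + g j • y j)) =
      adjoin A (insert a (Set.range y)) := by
  have unit_smul_mem_iff (S : Subalgebra A B) (j : ι) : g j • y j ∈ S ↔ y j ∈ S :=
    Submodule.smul_mem_iff' (p := Subalgebra.toSubmodule S) (g j)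
  apply le_antisymm <;> rw [adjoin_le_iff] <;> rintro z (rfl | ⟨j, rfl⟩)
  · exact subset_adjoin (Set.mem_insert _ _)
  · exact add_mem (subset_adjoin (Set.mem_insert _ _))
      ((unit_smul_mem_iff _ j).2 (subset_adjoin (Set.mem_insert_of_mem _ ⟨j, rfl⟩)))
  · exact subset_adjoin (Set.mem_insert _ _)
  · rw [SetLike.mem_coe, ← unit_smul_mem_iff,
      ← add_mem_cancel_left (subset_adjoin (Set.mem_insert _ _))]
    exact subset_adjoin (Set.mem_insert_of_mem _ ⟨j, rfl⟩)

theorem adjoin_insert_range_of_add_unit_smul_eq_one {a : B} {y : ι → B} {i : ι} (g : Aˣ)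
    (h : a + g • y i = 1) : adjoin A (insert a (Set.range y)) = adjoin A (Set.range y) := by
  have ha : a ∈ adjoin A (Set.range y) := by
    rw [eq_sub_of_add_eq h]
    exact sub_mem (one_mem _)
      (Subalgebra.smul_mem _ (subset_adjoin (Set.mem_range_self i)) (g : A))
  exact le_antisymm (adjoin_le (Set.insert_subset ha subset_adjoin))
    (adjoin_mono (Set.subset_insert _ _))

end Algebra

/-- Let `A` be a domain with fraction field `K`, `f ∈ A`, `x₁,…,x_r ∈ A`,
`g₁,…,g_r` units of `A`, and `f_j = f + x_j·g_j`.  Fix `i` with `fᵢ ≠ 0`.  Then, as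
`A`-subalgebras of `K`, `A[f/fᵢ, f₁/fᵢ, …, f_r/fᵢ] = A[x₁/fᵢ, …, x_r/fᵢ]`. -/
theorem stmt_12 (A : Type*) [CommRing A] [IsDomain A] (r : ℕ)
    (f : A) (x : Fin r → A) (g : Fin r → Aˣ)
    (f' : Fin r → A) (hf' : ∀ j, f' j = f + x j * (g j : A))
    (i : Fin r) (hfi : f' i ≠ 0) :
    Algebra.adjoin A
        ({algebraMap A (FractionRing A) f / algebraMap A (FractionRing A) (f' i)} ∪
          Set.range fun j : Fin r =>
            algebraMap A (FractionRing A) (f' j) / algebraMap A (FractionRing A) (f' i)) =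
      Algebra.adjoin A
        (Set.range fun j : Fin r =>
          algebraMap A (FractionRing A) (x j) / algebraMap A (FractionRing A) (f' i)) := by
  set φ := algebraMap A (FractionRing A)
  have hquot (j : Fin r) :
      φ (f' j) / φ (f' i) = φ f / φ (f' i) + g j • (φ (x j) / φ (f' i)) := by
    rw [hf', Units.smul_def, Algebra.smul_def, map_add, map_mul, add_div]
    ring
  have hunit : φ f / φ (f' i) + g i • (φ (x i) / φ (f' i)) = 1 := by
    rw [← hquot, div_self ((map_ne_zero_iff φ (IsFractionRing.injective A _)).2 hfi)]
  rw [Set.singleton_union, funext hquot, Algebra.adjoin_insert_range_add_unit_smul]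
  exact Algebra.adjoin_insert_range_of_add_unit_smul_eq_one (g i) hunit
end

section
/- Let k be a field, let 1 ≤ r < n, let R = k[x₁,…,xₙ], let f be a nonzero polynomial in the variables x_{r+1},…,xₙ only, and for i = 1,…,r set fᵢ = f(x_{r+1},…,x_{n−1}, xₙ + xᵢ). Let g ∈ R be nonzero and let A = R[1/g] ⊆ K = k(x₁,…,xₙ) be the localization of R at g. Assume that for each i the polynomial gᵢ := (fᵢ − f)/xᵢ (which lies in R) is a unit in A. Then the A-subalgebra A[f₁/f, …, f_r/f] of K is isomorphic, as a k-algebra, to a localization of the polynomial ring k[y₁,…,yₙ] at a single element. (This is the first plain chart in the proof that the blowup along Z is plain.) -/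
/-!
The substitution `Φ : xᵢ ↦ xᵢ / f` (`i ≤ r`) is an injective `k`-algebra map `k[x] → K`: it fixes
`f`, which only involves the other variables, so `xᵢ ↦ xᵢ f` extends to `K` and inverts it there.
`Φ` sends `G := g(x₁ f, …, x_r f, x_{r+1}, …)` to `g`, hence extends to an embedding of `k[x][1/G]`
into `K` whose image is the ring generated by `Φ(k[x])` and `1/g`. That ring is `A[f₁/f, …, f_r/f]`,
because `fᵢ / f = 1 + (xᵢ / f) gᵢ` and, conversely, `xᵢ / f = (fᵢ / f - 1) gᵢ⁻¹` with `gᵢ⁻¹ ∈ A`.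
-/

open MvPolynomial

/-- The canonical map from the polynomial ring `k[x₁,…,xₙ]` to its fraction field
`k(x₁,…,xₙ)`. -/
noncomputable def toFrac (k : Type*) [Field k] (n : ℕ) :
    MvPolynomial (Fin n) k →+* FractionRing (MvPolynomial (Fin n) k) :=
  algebraMap _ _

/-- The substitution `xₙ ↦ xₙ + xᵢ` (fixing all other variables) on `k[x₁,…,xₙ]`. -/
noncomputable def substLast (k : Type*) [Field k] (n : ℕ) (i : Fin n) :
    MvPolynomial (Fin n) k →ₐ[k] MvPolynomial (Fin n) k :=
  aeval (fun j : Fin n => if (j : ℕ) = n - 1 then X j + X i else X j)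

set_option synthInstance.maxHeartbeats 800000 in
/-- The `k`-algebra structure on an iterated subalgebra `B ⊆ K` over
`A ⊆ K = k(x₁,…,xₙ)`, coming from `k → k[x₁,…,xₙ] → A → B`. -/
noncomputable def algebraGen (k : Type*) [Field k] (n : ℕ)
    (A : Subalgebra (MvPolynomial (Fin n) k) (FractionRing (MvPolynomial (Fin n) k)))
    (B : Subalgebra A (FractionRing (MvPolynomial (Fin n) k))) : Algebra k B :=
  RingHom.toAlgebra ((algebraMap A B).comp
    ((algebraMap (MvPolynomial (Fin n) k) A).comp
      (algebraMap k (MvPolynomial (Fin n) k))))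

theorem IsLocalization.Away.lift_injective_of_injective {R S P : Type*} [CommRing R]
    [CommRing S] [Algebra R S] [CommRing P] (x : R) [IsLocalization.Away x S] {φ : R →+* P}
    (hx : IsUnit (φ x)) (hφ : Function.Injective φ) :
    Function.Injective (IsLocalization.Away.lift x hx : S →+* P) :=
  (IsLocalization.lift_injective_iff _).2 fun a b =>
    ⟨fun h => by simpa using congrArg (IsLocalization.Away.lift x hx) h,
      fun h => by rw [hφ h]⟩

theorem IsLocalization.Away.range_lift {R S K : Type*} [CommRing R] [CommRing S] [Algebra R S]
    [Field K] (x : R) [IsLocalization.Away x S] {φ : R →+* K} (hx : IsUnit (φ x)) :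
    (IsLocalization.Away.lift x hx : S →+* K).range =
      Subring.closure (insert (φ x)⁻¹ (Set.range φ)) := by
  apply le_antisymm
  · rintro _ ⟨z, rfl⟩
    obtain ⟨⟨a, y⟩, rfl⟩ := IsLocalization.mk'_surjective (Submonoid.powers x) z
    obtain ⟨m, hm⟩ := y.2
    have hlift : lift x hx (IsLocalization.mk' S a y) = φ a * (φ x)⁻¹ ^ m :=
      (IsLocalization.lift_mk'_spec _ _ _ _).2 (by
        rw [← hm, map_pow, mul_left_comm, ← mul_pow, mul_inv_cancel₀ hx.ne_zero, one_pow, mul_one])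
    rw [hlift]
    exact mul_mem (Subring.subset_closure (Set.mem_insert_of_mem _ ⟨a, rfl⟩))
      (pow_mem (Subring.subset_closure (Set.mem_insert _ _)) m)
  · rw [Subring.closure_le]
    rintro _ (rfl | ⟨a, rfl⟩)
    · refine ⟨invSelf x, eq_inv_of_mul_eq_one_right ?_⟩
      simpa only [map_mul, map_one, lift_eq] using congrArg (lift x hx) (mul_invSelf (S := S) x)
    · exact ⟨algebraMap R S a, lift_eq x hx a⟩

namespace MvPolynomial

variable {σ : Type*}

theorem algHom_eqOn_supported {R S : Type*} [CommSemiring R] [Semiring S] [Algebra R S]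
    {φ₁ φ₂ : MvPolynomial σ R →ₐ[R] S} {t : Set σ} (h : ∀ j ∈ t, φ₁ (X j) = φ₂ (X j)) :
    Set.EqOn φ₁ φ₂ (supported R t) :=
  AlgHom.eqOn_adjoin_iff.2 (by rintro _ ⟨j, hj, rfl⟩; exact h j hj)

theorem algHom_apply_mem_of_X_mem {R S : Type*} [CommSemiring R] [Ring S] [Algebra R S]
    (φ : MvPolynomial σ R →ₐ[R] S) {T : Subring S} (hC : ∀ c, algebraMap R S c ∈ T)
    (hX : ∀ j, φ (X j) ∈ T) (p : MvPolynomial σ R) : φ p ∈ T := by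
  induction p using MvPolynomial.induction_on with
  | C c => simpa [← algebraMap_eq] using hC c
  | add p q hp hq => simpa using add_mem hp hq
  | mul_X p j hp => simpa using mul_mem hp (hX j)

end MvPolynomial

section Chart

variable {σ k : Type*} [Field k]

local notation "R" => MvPolynomial σ k
local notation "K" => FractionRing (MvPolynomial σ k)
local notation "ι" => algebraMap (MvPolynomial σ k) (FractionRing (MvPolynomial σ k))

variable (s : Set σ) [DecidablePred (· ∈ s)] (f : MvPolynomial σ k)

noncomputable def divideVars : R →ₐ[k] K :=
  aeval fun j => if j ∈ s then ι (X j) / ι f else ι (X j)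

noncomputable def multiplyVars : R →ₐ[k] R :=
  aeval fun j => if j ∈ s then X j * f else X j

variable {s f}

theorem divideVars_X_of_mem {j : σ} (hj : j ∈ s) : divideVars s f (X j) = ι (X j) / ι f := by
  simp [divideVars, hj]

theorem divideVars_X_of_notMem {j : σ} (hj : j ∉ s) : divideVars s f (X j) = ι (X j) := by
  simp [divideVars, hj]

theorem multiplyVars_X_of_mem {j : σ} (hj : j ∈ s) : multiplyVars s f (X j) = X j * f := by
  simp [multiplyVars, hj]

theorem multiplyVars_X_of_notMem {j : σ} (hj : j ∉ s) : multiplyVars s f (X j) = X j := by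
  simp [multiplyVars, hj]

theorem divideVars_of_mem_supported {p : R} (hp : p ∈ supported k sᶜ) :
    divideVars s f p = ι p :=
  algHom_eqOn_supported (φ₂ := IsScalarTower.toAlgHom k R K)
    (fun _ hj => divideVars_X_of_notMem hj) hp

theorem multiplyVars_of_mem_supported {p : R} (hp : p ∈ supported k sᶜ) :
    multiplyVars s f p = p :=
  algHom_eqOn_supported (φ₂ := AlgHom.id k R) (fun _ hj => multiplyVars_X_of_notMem hj) hp

variable (hf : f ≠ 0) (hsupp : f ∈ supported k sᶜ)
include hf hsupp

theorem divideVars_multiplyVars (p : R) : divideVars s f (multiplyVars s f p) = ι p := by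
  suffices (divideVars s f).comp (multiplyVars s f) = IsScalarTower.toAlgHom k R K from
    AlgHom.congr_fun this p
  refine algHom_ext fun j => ?_
  by_cases hj : j ∈ s
  · simp [multiplyVars_X_of_mem hj, divideVars_X_of_mem hj, divideVars_of_mem_supported hsupp,
      hf]
  · simp [multiplyVars_X_of_notMem hj, divideVars_X_of_notMem hj]

theorem multiplyVars_injective : Function.Injective (multiplyVars s f) := fun p q hpq =>
  IsFractionRing.injective R K <| by
    rw [← divideVars_multiplyVars hf hsupp, hpq, divideVars_multiplyVars hf hsupp]

theorem divideVars_injective : Function.Injective (divideVars s f) := by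
  let ψ : K →+* K := IsFractionRing.lift (g := (algebraMap R K).comp (multiplyVars s f : R →+* R))
    ((IsFractionRing.injective R K).comp (multiplyVars_injective hf hsupp))
  have hψ : ψ.comp (divideVars s f : R →+* K) = algebraMap R K := by
    refine ringHom_ext (fun c => ?_) fun j => ?_
    · simp [ψ, IsScalarTower.algebraMap_apply k R K]
    by_cases hj : j ∈ s
    · simp [ψ, divideVars_X_of_mem hj, multiplyVars_X_of_mem hj,
        multiplyVars_of_mem_supported hsupp, hf]
    · simp [ψ, divideVars_X_of_notMem hj, multiplyVars_X_of_notMem hj]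
  intro p q hpq
  have h := RingHom.congr_fun hψ
  simp only [RingHom.comp_apply, RingHom.coe_coe] at h
  exact IsFractionRing.injective R K (by rw [← h, ← h, hpq])

theorem div_eq_divideVars {F gi : R} {i : σ} (hi : i ∈ s) (hF : F - f = X i * gi) :
    ι F / ι f = divideVars s f (1 + X i * multiplyVars s f gi) := by
  have hιf : ι f ≠ 0 := (map_ne_zero_iff _ (IsFractionRing.injective R K)).2 hf
  rw [show F = f + X i * gi by rw [← hF]; ring]
  simp only [map_add, map_one, map_mul, divideVars_multiplyVars hf hsupp, divideVars_X_of_mem hi]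
  field_simp

theorem closure_range_divideVars {g : R} {F : σ → R}
    (hunit : ∀ i ∈ s, ∃ gi, F i - f = X i * gi ∧
      ∃ u ∈ Algebra.adjoin R {(ι g)⁻¹}, ι gi * u = 1) :
    Subring.closure (insert (ι g)⁻¹ (Set.range (divideVars s f))) =
      (Algebra.adjoin (Algebra.adjoin R {(ι g)⁻¹})
        {z | ∃ i ∈ s, z = ι (F i) / ι f}).toSubring := by
  set A := Algebra.adjoin R {(ι g)⁻¹}
  have hA : (A : Set K) ⊆ Subring.closure (insert (ι g)⁻¹ (Set.range (divideVars s f))) := by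
    rw [← Subalgebra.coe_toSubring, SetLike.coe_subset_coe, Algebra.adjoin_eq_ring_closure,
      Subring.closure_le]
    rintro _ (⟨p, rfl⟩ | rfl)
    · rw [← divideVars_multiplyVars hf hsupp p]
      exact Subring.subset_closure (Set.mem_insert_of_mem _ ⟨_, rfl⟩)
    · exact Subring.subset_closure (Set.mem_insert _ _)
  rw [Algebra.adjoin_eq_ring_closure, Subalgebra.setRange_algebraMap]
  apply le_antisymm
  · rw [Subring.closure_le]
    rintro _ (rfl | ⟨p, rfl⟩)
    · exact Subring.subset_closure (Or.inl (Algebra.subset_adjoin rfl))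
    refine algHom_apply_mem_of_X_mem _ (fun c => ?_) (fun j => ?_) p
    · rw [IsScalarTower.algebraMap_apply k R K]
      exact Subring.subset_closure (Or.inl (A.algebraMap_mem _))
    by_cases hj : j ∈ s
    · obtain ⟨gi, hF, u, hu, hgu⟩ := hunit j hj
      have hX : divideVars s f (X j) = (ι (F j) / ι f - 1) * u := by
        rw [div_eq_divideVars hf hsupp hj hF, map_add, map_one, map_mul,
          divideVars_multiplyVars hf hsupp, add_sub_cancel_left, mul_assoc, hgu, mul_one]
      rw [hX]
      exact mul_mem (sub_mem (Subring.subset_closure (Or.inr ⟨j, hj, rfl⟩)) (one_mem _))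
        (Subring.subset_closure (Or.inl hu))
    · rw [divideVars_X_of_notMem hj]
      exact Subring.subset_closure (Or.inl (A.algebraMap_mem _))
  · rw [Subring.closure_le]
    rintro _ (hz | ⟨i, hi, rfl⟩)
    · exact hA hz
    obtain ⟨gi, hF, -⟩ := hunit i hi
    rw [div_eq_divideVars hf hsupp hi hF]
    exact Subring.subset_closure (Set.mem_insert_of_mem _ ⟨_, rfl⟩)

theorem exists_injective_range_eq_adjoin {g : R} (hg : g ≠ 0) {F : σ → R}
    (hunit : ∀ i ∈ s, ∃ gi, F i - f = X i * gi ∧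
      ∃ u ∈ Algebra.adjoin R {(ι g)⁻¹}, ι gi * u = 1) :
    ∃ Λ : Localization.Away (multiplyVars s f g) →ₐ[k] K, Function.Injective Λ ∧
      Set.range Λ =
        Algebra.adjoin (Algebra.adjoin R {(ι g)⁻¹}) {z | ∃ i ∈ s, z = ι (F i) / ι f} := by
  have hG : IsUnit (divideVars s f (multiplyVars s f g)) := by
    rw [divideVars_multiplyVars hf hsupp]
    exact isUnit_iff_ne_zero.2 ((map_ne_zero_iff _ (IsFractionRing.injective R K)).2 hg)
  refine ⟨IsLocalization.Away.liftAlgHom _ hG,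
    IsLocalization.Away.lift_injective_of_injective _ hG (divideVars_injective hf hsupp), ?_⟩
  calc Set.range (IsLocalization.Away.liftAlgHom _ hG)
      = ((IsLocalization.Away.lift (S := Localization.Away (multiplyVars s f g)) _ hG).range :
          Set K) := (RingHom.coe_range _).symm
    _ = Subring.closure (insert (ι g)⁻¹ (Set.range (divideVars s f))) := by
      rw [IsLocalization.Away.range_lift]
      simp only [AlgHom.toRingHom_eq_coe, AlgHom.coe_toRingHom, divideVars_multiplyVars hf hsupp]
    _ = _ := by rw [closure_range_divideVars hf hsupp hunit]; rfl

end Chart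

theorem stmt_13_general (k : Type*) [Field k] (n r : ℕ)
    (f : MvPolynomial (Fin n) k) (hf : f ≠ 0)
    (hsupp : f ∈ supported k {j : Fin n | r ≤ (j : ℕ)})
    (g : MvPolynomial (Fin n) k) (hg : g ≠ 0)
    (A : Subalgebra (MvPolynomial (Fin n) k) (FractionRing (MvPolynomial (Fin n) k)))
    (hA : A = Algebra.adjoin (MvPolynomial (Fin n) k) {(toFrac k n g)⁻¹})
    (hunit : ∀ i : Fin n, (i : ℕ) < r →
      ∃ gi : MvPolynomial (Fin n) k, substLast k n i f - f = X i * gi ∧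
        ∃ u ∈ A, toFrac k n gi * u = 1)
    (B : Subalgebra A (FractionRing (MvPolynomial (Fin n) k)))
    (hB : B = Algebra.adjoin A
      {z : FractionRing (MvPolynomial (Fin n) k) | ∃ i : Fin n, (i : ℕ) < r ∧
        z = toFrac k n (substLast k n i f) / toFrac k n f}) :
    ∃ G : MvPolynomial (Fin n) k,
      Nonempty (@AlgEquiv k B (Localization.Away G) _ _ _ (algebraGen k n A B) _) := by
  have hsupp' : f ∈ supported k {j : Fin n | (j : ℕ) < r}ᶜ := by
    simpa only [Set.compl_ofPred, not_lt] using hsupp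
  subst hA
  obtain ⟨Λ, hΛ, hrange⟩ := exists_injective_range_eq_adjoin hf hsupp' hg hunit
  replace hrange : Set.range Λ = B := by rw [hB]; exact hrange
  let := algebraGen k n _ B
  let e := RingEquiv.ofBijective (Λ.toRingHom.codRestrict B fun z => by
    rw [← SetLike.mem_coe, ← hrange]; exact ⟨z, rfl⟩)
    ⟨fun z w h => hΛ (congrArg Subtype.val h), fun b => by
      obtain ⟨z, hz⟩ : b.1 ∈ Set.range Λ := by rw [hrange]; exact b.2
      exact ⟨z, Subtype.ext hz⟩⟩
  exact ⟨_, ⟨(AlgEquiv.ofRingEquiv (f := e) fun c => Subtype.ext (Λ.commutes c)).symm⟩⟩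

/-- Let `1 ≤ r < n`, let `f ∈ k[x₁,…,xₙ]` be a nonzero polynomial in the variables
`x_{r+1},…,xₙ` only, and for `i ≤ r` let `fᵢ = f(x_{r+1},…,x_{n−1}, xₙ + xᵢ)`.  Let
`A = R[1/g] ⊆ K` for a nonzero `g`, and assume each `gᵢ = (fᵢ − f)/xᵢ` is a unit in `A`.
Then the `A`-subalgebra `A[f₁/f, …, f_r/f]` of `K` is isomorphic, as a `k`-algebra,
to a localization of `k[y₁,…,yₙ]` at a single element.  (The first plain chart of the
blowup along `Z`.) -/
theorem stmt_13 (k : Type*) [Field k] (n r : ℕ) (hr : 1 ≤ r) (hrn : r < n)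
    (f : MvPolynomial (Fin n) k) (hf : f ≠ 0)
    (hsupp : f ∈ supported k {j : Fin n | r ≤ (j : ℕ)})
    (g : MvPolynomial (Fin n) k) (hg : g ≠ 0)
    (A : Subalgebra (MvPolynomial (Fin n) k) (FractionRing (MvPolynomial (Fin n) k)))
    (hA : A = Algebra.adjoin (MvPolynomial (Fin n) k) {(toFrac k n g)⁻¹})
    (hunit : ∀ i : Fin n, (i : ℕ) < r →
      ∃ gi : MvPolynomial (Fin n) k, substLast k n i f - f = X i * gi ∧
        ∃ u ∈ A, toFrac k n gi * u = 1)
    (B : Subalgebra A (FractionRing (MvPolynomial (Fin n) k)))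
    (hB : B = Algebra.adjoin A
      {z : FractionRing (MvPolynomial (Fin n) k) | ∃ i : Fin n, (i : ℕ) < r ∧
        z = toFrac k n (substLast k n i f) / toFrac k n f}) :
    ∃ G : MvPolynomial (Fin n) k,
      Nonempty (@AlgEquiv k B (Localization.Away G) _ _ _ (algebraGen k n A B) _) :=
  stmt_13_general k n r f hf hsupp g hg A hA hunit B hB
end

section
/- Let k be a field and let u, v ∈ k with u²v² + 1 ≠ 0. Set x = u²v/(u²v² + 1), y = v, and z = u/(u²v² + 1). Then x = (x² + z²)·y (so the point (x,y,z) lies on the surface S : x = (x² + z²)y), 1 − x·y ≠ 0, and z/(1 − x·y) = u. (The map (u,v) ↦ (u²v/(u²v²+1), v, u/(u²v²+1)) maps the complement of u²v²+1 = 0 into S off the locus 1 − xy = 0, and (x,y,z) ↦ (z/(1−xy), y) is a left inverse.) -/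
lemma one_sub_div_mul_eq_inv {k : Type*} [Field k] {u v : k} (h : u ^ 2 * v ^ 2 + 1 ≠ 0) :
    1 - u ^ 2 * v / (u ^ 2 * v ^ 2 + 1) * v = (u ^ 2 * v ^ 2 + 1)⁻¹ := by
  field_simp
  ring

/-- The map `(u,v) ↦ (u²v/(u²v²+1), v, u/(u²v²+1))` maps the complement of
`u²v² + 1 = 0` into the surface `S : x = (x² + z²)y` away from the locus `1 − xy = 0`,
and `(x,y,z) ↦ (z/(1−xy), y)` is a left inverse. -/
theorem stmt_16 (k : Type*) [Field k] (u v : k) (h : u ^ 2 * v ^ 2 + 1 ≠ 0)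
    (x y z : k) (hx : x = u ^ 2 * v / (u ^ 2 * v ^ 2 + 1)) (hy : y = v)
    (hz : z = u / (u ^ 2 * v ^ 2 + 1)) :
    x = (x ^ 2 + z ^ 2) * y ∧ 1 - x * y ≠ 0 ∧ z / (1 - x * y) = u := by
  subst hx hy hz
  have hxy := one_sub_div_mul_eq_inv h
  refine ⟨?_, ?_, ?_⟩
  · field_simp
  · rw [hxy]
    exact inv_ne_zero h
  · rw [hxy, div_inv_eq_mul, div_mul_cancel₀ _ h]
end

section
/- Let k be a field and let x, y, z ∈ k with x = (x² + z²)·y and 1 − x·y ≠ 0. Set u = z/(1 − x·y) and v = y. Then u²v² + 1 ≠ 0, u²v/(u²v² + 1) = x, and u/(u²v² + 1) = z. (The map (x,y,z) ↦ (z/(1−xy), y) from the surface S : x = (x²+z²)y, restricted to the locus 1 − xy ≠ 0, has the map (u,v) ↦ (u²v/(u²v²+1), v, u/(u²v²+1)) as a two-sided inverse; hence this locus of S is a plain chart.) -/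
/-!
On `S` one has the identity `(zy)² + (1 - xy)² = 1 - xy`. Hence with `w = 1 - xy` and `u = z/w`,
`u²y² + 1 = w⁻¹`, so dividing by `u²y² + 1` is multiplying by `w`: this returns `u ↦ z`, and
`u²y ↦ z²y/w = x`, since `z²y = x w` is again the equation of `S`.
-/

section SurfaceChart

variable {k : Type*} [Field k] {x y z : k}

theorem sq_mul_sq_add_one_sub_sq_eq (hS : x = (x ^ 2 + z ^ 2) * y) :
    z ^ 2 * y ^ 2 + (1 - x * y) ^ 2 = 1 - x * y := by
  linear_combination -y * hS

theorem div_one_sub_sq_mul_sq_add_one_eq_inv (hS : x = (x ^ 2 + z ^ 2) * y)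
    (h : 1 - x * y ≠ 0) :
    (z / (1 - x * y)) ^ 2 * y ^ 2 + 1 = (1 - x * y)⁻¹ := by
  rw [div_pow, div_mul_eq_mul_div, div_add_one (pow_ne_zero 2 h),
    sq_mul_sq_add_one_sub_sq_eq hS, sq, div_mul_cancel_left₀ h]

end SurfaceChart

/-- On the surface `S : x = (x² + z²)y`, restricted to the locus `1 − xy ≠ 0`,
the map `(x,y,z) ↦ (z/(1−xy), y)` has `(u,v) ↦ (u²v/(u²v²+1), v, u/(u²v²+1))`
as a two-sided inverse. -/
theorem stmt_17 (k : Type*) [Field k] (x y z : k) (hS : x = (x ^ 2 + z ^ 2) * y)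
    (h : 1 - x * y ≠ 0) (u v : k) (hu : u = z / (1 - x * y)) (hv : v = y) :
    u ^ 2 * v ^ 2 + 1 ≠ 0 ∧ u ^ 2 * v / (u ^ 2 * v ^ 2 + 1) = x ∧
      u / (u ^ 2 * v ^ 2 + 1) = z := by
  subst hu hv
  rw [div_one_sub_sq_mul_sq_add_one_eq_inv hS h, div_inv_eq_mul, div_inv_eq_mul]
  refine ⟨inv_ne_zero h, ?_, div_mul_cancel₀ z h⟩
  field_simp
  linear_combination -hS
end
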